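/- arXiv:2501.07692 — 3 statements merged into one kernel-verified Lean document; each statement's English description precedes it below -/
import Mathlib

section
/- For all integers d ≥ 2 and n ≥ 0, the generalized Euler number ℰ_n^{(d)} (a priori a rational number) is an integer. -/
/-!
The series `∑ x^{dk}/(dk)!` is the exponential generating function of an integer sequence with
constant term `1`. For any such series `φ = ∑ aₘ xᵐ/m!`, comparing coefficients of `xⁿ` in
`φ * φ⁻¹ = 1` and multiplying by `n!` gives the binomial recurrence
`bₙ = -∑_{i+j=n, j<n} (n choose i) aᵢ bⱼ` for `bₙ = n! [xⁿ] φ⁻¹`, so `bₙ ∈ ℤ` by strong induction.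
-/

/-- The generalized Euler number `ℰ_n^{(d)}`: `n!` times the coefficient of `x^n` in the
multiplicative inverse of the formal power series `∑_{k≥0} x^{dk}/(dk)!` over `ℚ`. -/
noncomputable def genEulerQ (d n : ℕ) : ℚ :=
  (n.factorial : ℚ) *
    PowerSeries.coeff n
      (PowerSeries.mk fun m => if d ∣ m then (1 : ℚ) / m.factorial else 0)⁻¹

open PowerSeries Finset Nat

noncomputable def egf (a : ℕ → ℚ) : PowerSeries ℚ :=
  mk fun m => a m / m !

theorem factorial_mul_coeff_egf_inv {a : ℕ → ℚ} (h0 : a 0 = 1) {n : ℕ} (hn : n ≠ 0) :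
    (n ! : ℚ) * coeff n (egf a)⁻¹ =
      -∑ p ∈ antidiagonal n, if p.2 < n then
        (n.choose p.1 : ℚ) * a p.1 * (p.2 ! * coeff p.2 (egf a)⁻¹) else 0 := by
  have hc : constantCoeff (egf a) = 1 := by simp [egf, h0]
  rw [coeff_inv, if_neg hn, hc, inv_one, neg_one_mul, mul_neg, Finset.mul_sum, neg_inj]
  refine Finset.sum_congr rfl fun p hp => ?_
  rw [HasAntidiagonal.mem_antidiagonal] at hp
  split_ifs
  · have hfact : (n ! : ℚ) = n.choose p.1 * p.1 ! * p.2 ! := by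
      rw [← hp, Nat.choose_symm_add]
      exact_mod_cast (Nat.add_choose_mul_factorial_mul_factorial p.1 p.2).symm
    have : (p.1 ! : ℚ) ≠ 0 := by positivity
    rw [egf, coeff_mk, hfact]
    field_simp
  · ring

theorem exists_int_factorial_mul_coeff_egf_inv {a : ℕ → ℤ} (h0 : a 0 = 1) (n : ℕ) :
    ∃ z : ℤ, (n ! : ℚ) * coeff n (egf fun m => (a m : ℚ))⁻¹ = z := by
  suffices (n ! : ℚ) * coeff n (egf fun m => (a m : ℚ))⁻¹ ∈ (Int.castRingHom ℚ).range by
    obtain ⟨z, hz⟩ := this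
    exact ⟨z, hz.symm⟩
  induction n using Nat.strong_induction_on with
  | _ n ih =>
    rcases eq_or_ne n 0 with rfl | hn
    · exact ⟨1, by simp [egf, h0]⟩
    rw [factorial_mul_coeff_egf_inv (by simp [h0]) hn]
    refine neg_mem (sum_mem fun p _ => ?_)
    split_ifs with hlt
    · exact mul_mem (mul_mem ⟨n.choose p.1, by simp⟩ ⟨a p.1, rfl⟩) (ih p.2 hlt)
    · exact zero_mem _

theorem stmt_6_general (d n : ℕ) : ∃ z : ℤ, genEulerQ d n = (z : ℚ) := by
  have h : genEulerQ d n = n ! * coeff n (egf fun m => ((if d ∣ m then 1 else 0 : ℤ) : ℚ))⁻¹ := by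
    simp only [genEulerQ, egf]
    congr 4 with m
    split_ifs <;> simp
  rw [h]
  exact exists_int_factorial_mul_coeff_egf_inv (by simp) n

theorem stmt_6 (d n : ℕ) (hd : 2 ≤ d) : ∃ z : ℤ, genEulerQ d n = (z : ℚ) :=
  stmt_6_general d n
end

section
/- For every prime p and every integer n ≥ 0, the generalized Euler number satisfies the congruence ℰ_{pn}^{(p)} ≡ (-1)^n (mod p²). -/
open Finset PowerSeries
open scoped Nat

theorem dvd_choose_mul_of_not_dvd {p : ℕ} (hp : p.Prime) (n : ℕ) {j : ℕ} (hj : ¬ p ∣ j) :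
    p ∣ (p * n).choose j := by
  have := Fact.mk hp
  have hj0 : 0 < j % p := Nat.pos_of_ne_zero fun h => hj (Nat.dvd_of_mod_eq_zero h)
  have := Choose.choose_modEq_choose_mod_mul_choose_div_nat (n := p * n) (k := j) (p := p)
  rwa [Nat.mul_mod_right, Nat.choose_eq_zero_of_lt hj0, zero_mul, Nat.modEq_zero_iff_dvd] at this

theorem choose_mul_add_mul_add_cast_zmod_sq {p : ℕ} (hp : p.Prime) (n k : ℕ) :
    (((p * n + p).choose (p * k + p) : ℕ) : ZMod (p ^ 2)) =
      (p * n).choose (p * k + p) + (p * n).choose (p * k) := by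
  -- In Vandermonde's sum over `C(p,i) C(pn,j)` only `i = 0` and `i = p` survive modulo `p²`:
  -- for `0 < i < p` both factors are divisible by `p`.
  rw [add_comm (p * n), Nat.add_choose_eq, Nat.cast_sum,
    sum_eq_add (0, p * k + p) (p, p * k) (by simp [hp.ne_zero])]
  · simp
  · rintro ⟨i, j⟩ hij ⟨hi0, hip⟩
    rw [HasAntidiagonal.mem_antidiagonal] at hij
    rcases lt_or_gt_of_ne (show i ≠ p by rintro rfl; exact hip (by simp; omega)) with hlt | hgt
    · have hi0 : i ≠ 0 := by rintro rfl; exact hi0 (by simp_all)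
      have hpj : ¬ p ∣ j := fun h =>
        absurd (Nat.le_of_dvd (Nat.pos_of_ne_zero hi0)
          ((Nat.dvd_add_left h).1 (by rw [hij]; exact ⟨k + 1, by ring⟩))) (by omega)
      rw [ZMod.natCast_eq_zero_iff, sq]
      exact mul_dvd_mul (hp.dvd_choose_self hi0 hlt) (dvd_choose_mul_of_not_dvd hp n hpj)
    · simp [Nat.choose_eq_zero_of_lt hgt]
  · simp
  · simp [add_comm]

theorem choose_mul_mul_cast_zmod_sq {p : ℕ} (hp : p.Prime) (n k : ℕ) :
    (((p * n).choose (p * k) : ℕ) : ZMod (p ^ 2)) = n.choose k := by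
  induction n generalizing k with
  | zero => cases k <;> simp [Nat.choose_eq_zero_of_lt, hp.pos]
  | succ n ih =>
    cases k with
    | zero => simp
    | succ k =>
      rw [mul_add_one, mul_add_one, choose_mul_add_mul_add_cast_zmod_sq hp, ← mul_add_one, ih, ih,
        Nat.choose_succ_succ', Nat.cast_add, add_comm]

theorem exists_intCast_of_sum_range_mul {R : Type*} [Ring R] (c : ℕ → ℕ → ℕ) (hc : ∀ n, c n n = 1)
    {u : ℕ → R} (hu : ∀ n, ∑ k ∈ range (n + 1), (c n k : R) * u k = if n = 0 then 1 else 0)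
    (n : ℕ) : ∃ z : ℤ, u n = z := by
  suffices u n ∈ (Int.castRingHom R).range from
    (RingHom.mem_range.1 this).imp fun _ h => h.symm
  induction n using Nat.strong_induction_on with
  | _ n ih =>
    have h := hu n
    rw [sum_range_succ, hc, Nat.cast_one, one_mul, ← eq_sub_iff_add_eq'] at h
    rw [h]
    refine sub_mem (by split_ifs <;> simp) (sum_mem fun k hk => mul_mem ?_ (ih k (mem_range.1 hk)))
    exact ⟨c n k, by simp⟩

theorem eq_neg_one_pow_of_sum_range_choose_mul {R : Type*} [CommRing R] {v : ℕ → R}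
    (hv : ∀ n, ∑ k ∈ range (n + 1), (n.choose k : R) * v k = if n = 0 then 1 else 0) (n : ℕ) :
    v n = (-1) ^ n := by
  induction n using Nat.strong_induction_on with
  | _ n ih =>
    have hbinom := congrArg (Int.cast : ℤ → R) (Int.alternating_sum_range_choose (n := n))
    push_cast at hbinom
    have h := hv n
    rw [sum_range_succ, Nat.choose_self, Nat.cast_one, one_mul] at h
    rw [sum_range_succ, Nat.choose_self, Nat.cast_one, mul_one,
      sum_congr rfl fun k hk => by rw [mul_comm, ← ih k (mem_range.1 hk)], ← h] at hbinom
    exact add_left_cancel hbinom.symm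

theorem PowerSeries.factorial_mul_coeff_mul {R : Type*} [CommSemiring R] (f g : R⟦X⟧) (m : ℕ) :
    (m ! : R) * coeff m (f * g) =
      ∑ x ∈ antidiagonal m, (m.choose x.1 : R) * (x.1 ! * coeff x.1 f) * (x.2 ! * coeff x.2 g) := by
  rw [coeff_mul, mul_sum]
  refine sum_congr rfl fun ⟨i, j⟩ hij => ?_
  rw [HasAntidiagonal.mem_antidiagonal] at hij
  subst hij
  rw [← Nat.choose_mul_factorial_mul_factorial (Nat.le_add_right i j), Nat.add_sub_cancel_left]
  push_cast
  ring

theorem sum_range_mul_add_one_eq_sum_mul {M : Type*} [AddCommMonoid M] {d : ℕ} (hd : 0 < d)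
    (n : ℕ) {g : ℕ → M} (hg : ∀ i, ¬ d ∣ i → g i = 0) :
    ∑ i ∈ range (d * n + 1), g i = ∑ k ∈ range (n + 1), g (d * k) := by
  rw [← sum_image fun a _ b _ h => Nat.eq_of_mul_eq_mul_left hd h]
  refine (sum_subset ?_ fun i hi hni => hg i ?_).symm
  · intro i hi
    obtain ⟨k, hk, rfl⟩ := mem_image.1 hi
    rw [mem_range] at hk ⊢
    exact Nat.lt_succ_of_le (Nat.mul_le_mul_left d (Nat.le_of_lt_succ hk))
  · rintro ⟨k, rfl⟩
    refine hni (mem_image.2 ⟨k, mem_range.2 ?_, rfl⟩)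
    rw [mem_range] at hi
    exact Nat.lt_succ_of_le (Nat.le_of_mul_le_mul_left (Nat.le_of_lt_succ hi) hd)

noncomputable def genEulerSeries (d : ℕ) : ℚ⟦X⟧ :=
  mk fun m => if d ∣ m then 1 / m ! else 0

theorem genEulerQ_eq (d n : ℕ) : genEulerQ d n = n ! * coeff n (genEulerSeries d)⁻¹ := rfl

theorem factorial_mul_coeff_genEulerSeries (d m : ℕ) :
    (m ! : ℚ) * coeff m (genEulerSeries d) = if d ∣ m then 1 else 0 := by
  split_ifs with h <;> simp [genEulerSeries, h, Nat.factorial_ne_zero]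

theorem sum_antidiagonal_choose_mul_genEulerQ (d m : ℕ) :
    ∑ x ∈ antidiagonal m, (m.choose x.1 : ℚ) * genEulerQ d x.1 * (if d ∣ x.2 then 1 else 0) =
      if m = 0 then 1 else 0 := by
  have hinv : (genEulerSeries d)⁻¹ * genEulerSeries d = 1 :=
    PowerSeries.inv_mul_cancel _ (by simp [genEulerSeries, ← coeff_zero_eq_constantCoeff_apply])
  have h := factorial_mul_coeff_mul (genEulerSeries d)⁻¹ (genEulerSeries d) m
  rw [hinv, coeff_one] at h
  simp_rw [← genEulerQ_eq, factorial_mul_coeff_genEulerSeries] at h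
  rw [← h]
  split_ifs with hm <;> simp [hm]

theorem genEulerQ_eq_zero_of_not_dvd {d m : ℕ} (hm : ¬ d ∣ m) : genEulerQ d m = 0 := by
  induction m using Nat.strong_induction_on with
  | _ m ih =>
    have h := sum_antidiagonal_choose_mul_genEulerQ d m
    rw [sum_eq_single_of_mem (m, 0) (by simp) ?_] at h
    · simpa [show m ≠ 0 by rintro rfl; exact hm (dvd_zero d)] using h
    · rintro ⟨i, j⟩ hij hne
      rw [HasAntidiagonal.mem_antidiagonal] at hij
      by_cases hj : d ∣ j
      · have hj0 : j ≠ 0 := by rintro rfl; simp_all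
        rw [ih i (by omega) fun hi => hm (hij ▸ dvd_add hi hj)]
        simp
      · simp [hj]

theorem sum_range_choose_mul_genEulerQ_mul {d : ℕ} (hd : 0 < d) (n : ℕ) :
    ∑ k ∈ range (n + 1), ((d * n).choose (d * k) : ℚ) * genEulerQ d (d * k) =
      if n = 0 then 1 else 0 := by
  have h := sum_antidiagonal_choose_mul_genEulerQ d (d * n)
  rw [Nat.sum_antidiagonal_eq_sum_range_succ
      (fun i j => ((d * n).choose i : ℚ) * genEulerQ d i * if d ∣ j then 1 else 0),
    sum_range_mul_add_one_eq_sum_mul hd n fun i hi => by simp [genEulerQ_eq_zero_of_not_dvd hi]]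
    at h
  simpa [← Nat.mul_sub, hd.ne'] using h

theorem stmt_12 (p n : ℕ) (hp : p.Prime) :
    ∃ z : ℤ, genEulerQ p (p * n) = (z : ℚ) ∧ z ≡ (-1) ^ n [ZMOD (p ^ 2)] := by
  have hrec := sum_range_choose_mul_genEulerQ_mul hp.pos
  choose z hz using exists_intCast_of_sum_range_mul (fun n k => (p * n).choose (p * k))
    (fun n => Nat.choose_self _) hrec
  have hzrec (n : ℕ) : ∑ k ∈ range (n + 1), (n.choose k : ZMod (p ^ 2)) * z k =
      if n = 0 then 1 else 0 := by
    have hint : ∑ k ∈ range (n + 1), ((p * n).choose (p * k) : ℤ) * z k =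
        if n = 0 then 1 else 0 := by
      simp_rw [hz] at hrec
      exact_mod_cast hrec n
    simpa [choose_mul_mul_cast_zmod_sq hp] using congrArg (Int.cast : ℤ → ZMod (p ^ 2)) hint
  refine ⟨z n, hz n, (ZMod.intCast_eq_intCast_iff _ _ _).1 ?_⟩
  push_cast
  exact eq_neg_one_pow_of_sum_range_choose_mul hzrec n
end

section
/- For all integers d ≥ 2 and n ≥ 1, the generalized Euler number is given by the determinant formula ℰ_{dn}^{(d)} = (-1)^n · (dn)! · det(M), where M is the n×n matrix whose (i,j) entry (for 1 ≤ i, j ≤ n) is 1/((i-j+1)d)! if i-j+1 ≥ 0 and 0 if i-j+1 < 0. -/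
/-!
If `f * g = 1` and `f(0) = 1`, comparing coefficients gives `g_{n+1} = -∑ᵢ f_{i+1} g_{n-i}`.
Expanding the lower Hessenberg Toeplitz determinant `det (f_{i+1-j})` along its first column
yields the same recurrence for `(-1)^n det`: deleting row `p` and the first column leaves a block
lower triangular matrix whose blocks are unitriangular and the size `n - p` Hessenberg matrix.
Finally `∑ x^{dk}/(dk)!` is `G(x^d)` with `G = ∑ x^k/(dk)!`, so its inverse is `G⁻¹(x^d)` and
`ℰ_{dn}^{(d)} / (dn)!` is the `n`-th coefficient of `G⁻¹`.
-/

open PowerSeries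

lemma Matrix.det_eq_det_submatrix_succ_succ_of_row_zero {R : Type*} [CommRing R] {m : ℕ}
    {B : Matrix (Fin (m + 1)) (Fin (m + 1)) R} (h00 : B 0 0 = 1)
    (h0 : ∀ j : Fin m, B 0 j.succ = 0) :
    B.det = (B.submatrix Fin.succ Fin.succ).det := by
  simp [Matrix.det_succ_row_zero, Fin.sum_univ_succ, h00, h0]

section LowerHessenbergToeplitz

variable {R : Type*} [CommRing R]

def lowerHessenbergToeplitz (a : ℕ → R) (n : ℕ) : Matrix (Fin n) (Fin n) R :=
  Matrix.of fun i j => if (j : ℕ) ≤ i + 1 then a (i + 1 - j) else 0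

@[simp]
lemma lowerHessenbergToeplitz_apply (a : ℕ → R) {n : ℕ} (i j : Fin n) :
    lowerHessenbergToeplitz a n i j = if (j : ℕ) ≤ i + 1 then a (i + 1 - j) else 0 :=
  rfl

lemma lowerHessenbergToeplitz_submatrix_succ_succ (a : ℕ → R) (n : ℕ) :
    (lowerHessenbergToeplitz a (n + 1)).submatrix Fin.succ Fin.succ =
      lowerHessenbergToeplitz a n := by
  ext i j
  simp

variable {a : ℕ → R}

lemma det_lowerHessenbergToeplitz_submatrix_succAbove_succ (ha : a 0 = 1) :
    ∀ (n : ℕ) (p : Fin (n + 1)),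
      ((lowerHessenbergToeplitz a (n + 1)).submatrix p.succAbove Fin.succ).det =
        (lowerHessenbergToeplitz a (n - p)).det
  | n, p => by
    induction p using Fin.cases with
    | zero => rw [Fin.succAbove_zero, lowerHessenbergToeplitz_submatrix_succ_succ]; rfl
    | succ p =>
      obtain ⟨m, rfl⟩ : ∃ m, n = m + 1 := ⟨n - 1, by have := p.pos; omega⟩
      have hrows : p.succ.succAbove ∘ Fin.succ = Fin.succ ∘ p.succAbove :=
        funext (Fin.succ_succAbove_succ p)
      rw [Matrix.det_eq_det_submatrix_succ_succ_of_row_zero (by simp [ha]) (by simp),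
        Matrix.submatrix_submatrix, hrows, ← Matrix.submatrix_submatrix,
        lowerHessenbergToeplitz_submatrix_succ_succ,
        det_lowerHessenbergToeplitz_submatrix_succAbove_succ ha m p, Fin.val_succ,
        Nat.add_sub_add_right]

lemma det_lowerHessenbergToeplitz_succ (ha : a 0 = 1) (n : ℕ) :
    (lowerHessenbergToeplitz a (n + 1)).det =
      ∑ i : Fin (n + 1),
        (-1) ^ (i : ℕ) * a (i + 1) * (lowerHessenbergToeplitz a (n - i)).det := by
  rw [Matrix.det_succ_column_zero]
  refine Finset.sum_congr rfl fun i _ => ?_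
  simp [det_lowerHessenbergToeplitz_submatrix_succAbove_succ ha]

lemma neg_one_pow_mul_det_lowerHessenbergToeplitz_succ (ha : a 0 = 1) (n : ℕ) :
    (-1) ^ (n + 1) * (lowerHessenbergToeplitz a (n + 1)).det =
      -∑ i ∈ Finset.range (n + 1),
        a (i + 1) * ((-1) ^ (n - i) * (lowerHessenbergToeplitz a (n - i)).det) := by
  rw [det_lowerHessenbergToeplitz_succ ha, Fin.sum_univ_eq_sum_range
    (fun i => (-1) ^ i * a (i + 1) * (lowerHessenbergToeplitz a (n - i)).det), Finset.mul_sum,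
    ← Finset.sum_neg_distrib]
  refine Finset.sum_congr rfl fun i hi => ?_
  obtain ⟨k, rfl⟩ := Nat.exists_eq_add_of_le (Finset.mem_range_succ_iff.mp hi)
  rw [Nat.add_sub_cancel_left]
  ring_nf
  simp [pow_mul']

end LowerHessenbergToeplitz

namespace PowerSeries

lemma coeff_succ_of_mul_eq_one {R : Type*} [CommRing R] {f g : R⟦X⟧}
    (hf : constantCoeff f = 1) (hfg : f * g = 1) (n : ℕ) :
    coeff (n + 1) g = -∑ i ∈ Finset.range (n + 1), coeff (i + 1) f * coeff (n - i) g := by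
  have h := congrArg (coeff (n + 1)) hfg
  rw [coeff_mul, Finset.Nat.sum_antidiagonal_succ, coeff_zero_eq_constantCoeff_apply, hf,
    Finset.Nat.sum_antidiagonal_eq_sum_range_succ_mk, coeff_one, if_neg n.succ_ne_zero] at h
  linear_combination h

theorem coeff_eq_det_lowerHessenbergToeplitz_of_mul_eq_one {R : Type*} [CommRing R]
    {f g : R⟦X⟧} (hf : constantCoeff f = 1) (hfg : f * g = 1) (n : ℕ) :
    coeff n g = (-1) ^ n * (lowerHessenbergToeplitz (fun k => coeff k f) n).det := by
  induction n using Nat.strong_induction_on with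
  | _ n ih =>
    rcases n with _ | n
    · have h := congrArg constantCoeff hfg
      rw [map_mul, hf, one_mul, map_one] at h
      simp [h]
    · rw [coeff_succ_of_mul_eq_one hf hfg, neg_one_pow_mul_det_lowerHessenbergToeplitz_succ
        (by rwa [coeff_zero_eq_constantCoeff_apply])]
      refine congrArg Neg.neg (Finset.sum_congr rfl fun i hi => ?_)
      rw [ih (n - i) (by omega)]

lemma inv_expand {K : Type*} [Field K] (p : ℕ) (hp : p ≠ 0) (φ : K⟦X⟧) :
    (expand p hp φ)⁻¹ = expand p hp φ⁻¹ := by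
  by_cases h : constantCoeff φ = 0
  · rw [inv_eq_zero.mpr (by rwa [constantCoeff_expand]), inv_eq_zero.mpr h, map_zero]
  · rw [inv_eq_iff_mul_eq_one (by rwa [constantCoeff_expand]), ← map_mul,
      PowerSeries.inv_mul_cancel _ h, map_one]

end PowerSeries

theorem stmt_14_general (d n : ℕ) (hd : 2 ≤ d) :
    genEulerQ d (d * n) =
      (-1 : ℚ) ^ n * ((d * n).factorial : ℚ) *
        Matrix.det (Matrix.of fun i j : Fin n =>
          if (j : ℕ) ≤ (i : ℕ) + 1 then
            (1 : ℚ) / (Nat.factorial (((i : ℕ) + 1 - (j : ℕ)) * d))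
          else 0) := by
  have hd0 : d ≠ 0 := by omega
  set G : ℚ⟦X⟧ := mk fun k => 1 / ((k * d).factorial : ℚ)
  have hG : constantCoeff G = 1 := by simp [G]
  have hexpand : (mk fun m => if d ∣ m then (1 : ℚ) / m.factorial else 0) = expand d hd0 G := by
    ext m
    simp only [coeff_mk, coeff_expand, G]
    split_ifs with hm
    · rw [Nat.div_mul_cancel hm]
    · rfl
  have hGinv : G * G⁻¹ = 1 := PowerSeries.mul_inv_cancel G (by simp [hG])
  rw [genEulerQ, hexpand, inv_expand, coeff_expand_mul,
    coeff_eq_det_lowerHessenbergToeplitz_of_mul_eq_one hG hGinv]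
  simp only [G, coeff_mk]
  rw [mul_left_comm, ← mul_assoc]
  rfl

theorem stmt_14 (d n : ℕ) (hd : 2 ≤ d) (hn : 1 ≤ n) :
    genEulerQ d (d * n) =
      (-1 : ℚ) ^ n * ((d * n).factorial : ℚ) *
        Matrix.det (Matrix.of fun i j : Fin n =>
          if (j : ℕ) ≤ (i : ℕ) + 1 then
            (1 : ℚ) / (Nat.factorial (((i : ℕ) + 1 - (j : ℕ)) * d))
          else 0) :=
  stmt_14_general d n hd
end
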